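/- The function g : [0, 1/4] → ℝ defined by g(s) = h((1 − √(1 − 4s))/2), where h is the binary entropy function, is concave. Equivalently, the binary entropy h(t) is a concave function of the variance t(1−t) for t ∈ [0, 1/2]. -/

import Mathlib

noncomputable def binEnt (t : ℝ) : ℝ :=
  -(t * Real.logb 2 t) - (1 - t) * Real.logb 2 (1 - t)

/-!
Write `r = √(1 - 4s)`, so that `t = (1 - r)/2` and `dt/ds = 1/r`. Since
`h'(t) = log((1 + r)/(1 - r))` (in nats), the derivative of `s ↦ h(t(s))` is
`(log(1 + r) - log(1 - r))/r = ∑ 2 r^(2k)/(2k + 1)`, an increasing function of `r`;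
as `r` decreases in `s`, the derivative is antitone.
-/

open Real Set

namespace Real

noncomputable def logRatioDiv (r : ℝ) : ℝ := (log (1 + r) - log (1 - r)) / r

lemma hasSum_logRatioDiv {r : ℝ} (hr₀ : r ≠ 0) (hr₁ : |r| < 1) :
    HasSum (fun k : ℕ => 2 / (2 * k + 1) * r ^ (2 * k)) (logRatioDiv r) := by
  refine ((hasSum_log_sub_log_of_abs_lt_one hr₁).div_const r).congr_fun fun k => ?_
  field_simp
  ring

lemma monotoneOn_logRatioDiv : MonotoneOn logRatioDiv (Ioo 0 1) := by
  intro a ⟨ha₀, ha₁⟩ b ⟨hb₀, hb₁⟩ hab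
  refine hasSum_le (fun k => ?_) (hasSum_logRatioDiv ha₀.ne' (by rwa [abs_of_pos ha₀]))
    (hasSum_logRatioDiv hb₀.ne' (by rwa [abs_of_pos hb₀]))
  gcongr

lemma sqrt_one_sub_four_mul_mem_Ioo {s : ℝ} (hs : s ∈ Ioo 0 (1 / 4)) :
    √(1 - 4 * s) ∈ Ioo 0 1 :=
  ⟨sqrt_pos.2 (by linarith [hs.2]), (sqrt_lt' one_pos).2 (by linarith [hs.1])⟩

lemma hasDerivAt_binEntropy_comp_variance {s : ℝ} (hs : s ∈ Ioo 0 (1 / 4)) :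
    HasDerivAt (fun s => binEntropy ((1 - √(1 - 4 * s)) / 2))
      (logRatioDiv √(1 - 4 * s)) s := by
  have hx : 0 < 1 - 4 * s := by linarith [hs.2]
  obtain ⟨hr₀, hr₁⟩ := sqrt_one_sub_four_mul_mem_Ioo hs
  set r := √(1 - 4 * s) with hr
  have ht : HasDerivAt (fun s => (1 - √(1 - 4 * s)) / 2) (1 / r) s := by
    have h := (((hasDerivAt_id s).const_mul 4).const_sub 1).sqrt hx.ne'
    refine ((h.const_sub 1).div_const 2).congr_deriv ?_
    simp only [id, ← hr]
    field_simp
    ring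
  refine ((hasDerivAt_binEntropy (by linarith) (by linarith)).comp s ht).congr_deriv ?_
  rw [← hr, logRatioDiv, show 1 - (1 - r) / 2 = (1 + r) / 2 by ring,
    log_div (by linarith) two_ne_zero, log_div (by linarith) two_ne_zero]
  ring

lemma concaveOn_binEntropy_comp_variance :
    ConcaveOn ℝ (Icc 0 (1 / 4)) (fun s => binEntropy ((1 - √(1 - 4 * s)) / 2)) := by
  have hf' := @hasDerivAt_binEntropy_comp_variance
  refine AntitoneOn.concaveOn_of_deriv (convex_Icc _ _) (by fun_prop) ?_ ?_ <;> rw [interior_Icc]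
  · exact fun s hs => (hf' hs).differentiableAt.differentiableWithinAt
  · intro s₁ hs₁ s₂ hs₂ hle
    rw [(hf' hs₁).deriv, (hf' hs₂).deriv]
    exact monotoneOn_logRatioDiv (sqrt_one_sub_four_mul_mem_Ioo hs₂)
      (sqrt_one_sub_four_mul_mem_Ioo hs₁) (sqrt_le_sqrt (by linarith))

end Real

lemma binEnt_eq_inv_log_two_mul_binEntropy (t : ℝ) : binEnt t = (log 2)⁻¹ * binEntropy t := by
  rw [binEnt, binEntropy_eq_negMulLog_add_negMulLog_one_sub, negMulLog, negMulLog, logb, logb]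
  ring

theorem stmt17 :
    ConcaveOn ℝ (Set.Icc (0 : ℝ) (1 / 4))
      (fun s => binEnt ((1 - Real.sqrt (1 - 4 * s)) / 2)) := by
  simp_rw [binEnt_eq_inv_log_two_mul_binEntropy]
  exact concaveOn_binEntropy_comp_variance.smul (by positivity)
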